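/- arXiv:1112.2855 — 3 statements merged into one kernel-verified Lean document; each statement's English description precedes it below -/
import Mathlib

section
/- Let T ∈ G_γ^d, where the sequence γ is strictly positive, non-increasing with limit zero, summable, and γ_1 = 1. Then sup_{m∈ℕ} { γ_m · ‖[T]_m^{−1}‖ } ≤ 4d³, where ‖·‖ denotes the spectral norm; in particular each Galerkin matrix [T]_m is invertible. -/
/-!
The lower bound in `memG` says `T² ≥ d⁻² Γ²` for `Γ = diag(γ_j)`, and operator monotonicity of
the square root would give `⟪T x, x⟫ ≥ (γ_m / d) ‖x‖²` on `span(ψ_1, …, ψ_m)`. On that span an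
elementary argument suffices. With `g = γ_m / d`, every `x` in the span satisfies
`2⟪x, y⟫ - ‖T y‖² ≤ ‖x‖² / g²` for all `y`, the variational form of `‖T⁻¹ x‖ ≤ ‖x‖ / g`. If
`x = T z`, Cauchy–Schwarz for the form `⟪T ·, ·⟫` would give
`‖x‖⁴ = ⟪T z, x⟫² ≤ ⟪T z, z⟫ ⟪T x, x⟫ ≤ (‖x‖² / g) ⟪T x, x⟫`; using instead the regularized
preimage `z = T (T² + g² / 2)⁻¹ x` costs a factor `4`. So `[T]_m` is coercive with constant
`γ_m / (4d)`, whence `‖[T]_m⁻¹‖ ≤ 4d / γ_m ≤ 4d³ / γ_m`.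
-/

open scoped RealInnerProductSpace Classical ENNReal NNReal
open Matrix MeasureTheory

noncomputable section

variable {H : Type} [NormedAddCommGroup H] [InnerProductSpace ℝ H] [CompleteSpace H]

/-- Spectral norm of a real matrix (largest singular value). -/
def specNorm {m : ℕ} (A : Matrix (Fin m) (Fin m) ℝ) : ℝ :=
  ‖Matrix.toEuclideanCLM (𝕜 := ℝ) A‖

/-- Galerkin matrix `[T]_m = (⟪ψ_j, T ψ_k⟫)_{1≤j,k≤m}` (0-indexed). -/
def opMat (ψ : HilbertBasis ℕ ℝ H) (T : H →L[ℝ] H) (m : ℕ) :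
    Matrix (Fin m) (Fin m) ℝ :=
  Matrix.of fun j k => ⟪ψ (j : ℕ), T (ψ (k : ℕ))⟫

/-- The ellipsoid `F_β^r`. -/
def memF (ψ : HilbertBasis ℕ ℝ H) (β : ℕ → ℝ) (r : ℝ) (h : H) : Prop :=
  Summable (fun j => β j * ⟪h, ψ j⟫ ^ 2) ∧ (∑' j, β j * ⟪h, ψ j⟫ ^ 2) ≤ r

/-- The class `G_γ^d` of strictly positive nuclear operators with sandwiched norm. -/
def memG (ψ : HilbertBasis ℕ ℝ H) (γ : ℕ → ℝ) (d : ℝ) (T : H →L[ℝ] H) : Prop :=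
  (∀ x y : H, ⟪T x, y⟫ = ⟪x, T y⟫) ∧ (∀ h : H, h ≠ 0 → 0 < ⟪T h, h⟫) ∧
    Summable (fun j => ⟪T (ψ j), ψ j⟫) ∧
    ∀ h : H,
      (d ^ 2)⁻¹ * (∑' j, γ j ^ 2 * ⟪h, ψ j⟫ ^ 2) ≤ ‖T h‖ ^ 2 ∧
      ‖T h‖ ^ 2 ≤ d ^ 2 * (∑' j, γ j ^ 2 * ⟪h, ψ j⟫ ^ 2)

/-- Coefficient vector `[g]_m` of `g = Γ φ`. -/
def gvec (ψ : HilbertBasis ℕ ℝ H) (Γ : H →L[ℝ] H) (φ : H) (m : ℕ) : Fin m → ℝ :=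
  fun j => ⟪Γ φ, ψ (j : ℕ)⟫

/-- Coefficients `[Γ]_m⁻¹ [g]_m` of the Galerkin solution. -/
def galCoef (ψ : HilbertBasis ℕ ℝ H) (Γ : H →L[ℝ] H) (φ : H) (m : ℕ) : Fin m → ℝ :=
  (opMat ψ Γ m)⁻¹ *ᵥ gvec ψ Γ φ m

/-- The Galerkin solution `φ_m`. -/
def galerkin (ψ : HilbertBasis ℕ ℝ H) (Γ : H →L[ℝ] H) (φ : H) (m : ℕ) : H :=
  ∑ j : Fin m, galCoef ψ Γ φ m j • (ψ (j : ℕ))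

/-- The linear functional `ℓ(h) = Σ_j ℓ_j ⟨h, ψ_j⟩`. -/
def ellOf (ψ : HilbertBasis ℕ ℝ H) (lc : ℕ → ℝ) (h : H) : ℝ := ∑' j, lc j * ⟪h, ψ j⟫

/-- `[ℓ]_m`. -/
def ellvec (lc : ℕ → ℝ) (m : ℕ) : Fin m → ℝ := fun j => lc (j : ℕ)

/-- Weighted (squared) norm `‖h‖_w²`. -/
def wnorm2 (ψ : HilbertBasis ℕ ℝ H) (w : ℕ → ℝ) (h : H) : ℝ := ∑' j, w j * ⟪h, ψ j⟫ ^ 2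

/-- `V_m^γ = Σ_{j=1}^m ℓ_j²/γ_j`. -/
def Vgam (lc γ : ℕ → ℝ) (m : ℕ) : ℝ := ∑ j ∈ Finset.range m, lc j ^ 2 / γ j

/-- `V_m = max_{1≤k≤m} [ℓ]_k^t [Γ]_k⁻¹ [ℓ]_k`. -/
def Vmax (ψ : HilbertBasis ℕ ℝ H) (lc : ℕ → ℝ) (Γ : H →L[ℝ] H) (m : ℕ) : ℝ :=
  ⨆ k : Fin m, ellvec lc (k + 1) ⬝ᵥ ((opMat ψ Γ (k + 1))⁻¹ *ᵥ ellvec lc (k + 1))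

/-- `σ_m² = 2(σ_Y² + [g]_m^t [Γ]_m⁻¹ [g]_m)` with `σ_Y² = σ² + ⟨Γφ,φ⟩`. -/
def sigmaSqm (ψ : HilbertBasis ℕ ℝ H) (Γ : H →L[ℝ] H) (φ : H) (σ : ℝ) (m : ℕ) : ℝ :=
  2 * ((σ ^ 2 + ⟪Γ φ, φ⟫) + gvec ψ Γ φ m ⬝ᵥ ((opMat ψ Γ m)⁻¹ *ᵥ gvec ψ Γ φ m))

/-- Theoretical penalty `p_m = 100 σ_m² V_m (1 + log n)/n`. -/
def penTheo (ψ : HilbertBasis ℕ ℝ H) (lc : ℕ → ℝ) (Γ : H →L[ℝ] H) (φ : H) (σ : ℝ)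
    (n m : ℕ) : ℝ :=
  100 * sigmaSqm ψ Γ φ σ m * Vmax ψ lc Γ m * ((1 + Real.log n) / n)

/-- `R_m^ℓ[x]` (here `m ≥ 1`; 0-indexed sequences, so `γ_m` is `γ (m-1)`). -/
def Rml (lc β γ : ℕ → ℝ) (x : ℝ) (m : ℕ) : ℝ :=
  max (∑' j, if m ≤ j then lc j ^ 2 / β j else 0)
    (max (γ (m - 1) / β (m - 1)) x * ∑ j ∈ Finset.range m, lc j ^ 2 / γ j)

/-- `R_*^ℓ[x] = min_{m ≥ 1} R_m^ℓ[x]`. -/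
def Rstar (lc β γ : ℕ → ℝ) (x : ℝ) : ℝ := ⨅ m : ℕ, Rml lc β γ x (m + 1)

variable {Ω : Type}

/-- Empirical covariance matrix `[Γ̂]_m`. -/
def hatGam (ψ : HilbertBasis ℕ ℝ H) (n : ℕ) (X : Fin n → Ω → H) (m : ℕ) (ω : Ω) :
    Matrix (Fin m) (Fin m) ℝ :=
  Matrix.of fun j k => (n : ℝ)⁻¹ * ∑ i, ⟪X i ω, ψ (j : ℕ)⟫ * ⟪X i ω, ψ (k : ℕ)⟫

/-- Empirical vector `[ĝ]_m`. -/
def hatgv (ψ : HilbertBasis ℕ ℝ H) (n : ℕ) (X : Fin n → Ω → H) (Y : Fin n → Ω → ℝ)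
    (m : ℕ) (ω : Ω) : Fin m → ℝ :=
  fun j => (n : ℝ)⁻¹ * ∑ i, Y i ω * ⟪X i ω, ψ (j : ℕ)⟫

/-- The thresholded plug-in estimator `ℓ̂_m = ℓ(φ̂_m)`. -/
def hatell (ψ : HilbertBasis ℕ ℝ H) (lc : ℕ → ℝ) (n : ℕ) (X : Fin n → Ω → H)
    (Y : Fin n → Ω → ℝ) (m : ℕ) (ω : Ω) : ℝ :=
  if IsUnit (hatGam ψ n X m ω).det ∧ specNorm (hatGam ψ n X m ω)⁻¹ ≤ (n : ℝ) then
    ellvec lc m ⬝ᵥ ((hatGam ψ n X m ω)⁻¹ *ᵥ hatgv ψ n X Y m ω)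
  else 0

/-- `M_n^ℓ`. -/
def Mln (lc : ℕ → ℝ) (n : ℕ) : ℕ :=
  sSup {m | 1 ≤ m ∧ (m : ℝ) ≤ (n : ℝ) ^ ((1 : ℝ) / 4) ∧
    (∑ j ∈ Finset.range m, lc j ^ 2) ≤ (n : ℝ)}

/-- Spectral norm of the inverse, `+∞` if singular. -/
def invNormE {m : ℕ} (A : Matrix (Fin m) (Fin m) ℝ) : ℝ≥0∞ :=
  if IsUnit A.det then ENNReal.ofReal (specNorm A⁻¹) else ⊤

/-- Random upper bound `M̂_n`. -/
def Mhat (ψ : HilbertBasis ℕ ℝ H) (lc : ℕ → ℝ) (n : ℕ) (X : Fin n → Ω → H) (ω : Ω) : ℕ :=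
  let S := {m | 2 ≤ m ∧ m ≤ Mln lc n ∧
    ENNReal.ofReal ((n : ℝ) / (1 + Real.log n)) <
      invNormE (hatGam ψ n X m ω) * ENNReal.ofReal (∑ j ∈ Finset.range m, lc j ^ 2)}
  if S.Nonempty then sInf S - 1 else Mln lc n

/-- Deterministic `M_n(a)` (with `a_m = a (m-1)` in 0-indexing). -/
def Mna (lc a : ℕ → ℝ) (n : ℕ) : ℕ :=
  let S := {m | 2 ≤ m ∧ m ≤ Mln lc n ∧
    (n : ℝ) / (1 + Real.log n) < a (m - 1) * ∑ j ∈ Finset.range m, lc j ^ 2}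
  if S.Nonempty then sInf S - 1 else Mln lc n

/-- `V̂_m = max_{1≤k≤m} [ℓ]_k^t [Γ̂]_k⁻¹ [ℓ]_k`. -/
def hatVmax (ψ : HilbertBasis ℕ ℝ H) (lc : ℕ → ℝ) (n : ℕ) (X : Fin n → Ω → H)
    (m : ℕ) (ω : Ω) : ℝ :=
  ⨆ k : Fin m, ellvec lc (k + 1) ⬝ᵥ ((hatGam ψ n X (k + 1) ω)⁻¹ *ᵥ ellvec lc (k + 1))

/-- Stochastic penalty `p̂_m`. -/
def hatpen (ψ : HilbertBasis ℕ ℝ H) (lc : ℕ → ℝ) (n : ℕ) (X : Fin n → Ω → H)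
    (Y : Fin n → Ω → ℝ) (m : ℕ) (ω : Ω) : ℝ :=
  700 * (2 * (n : ℝ)⁻¹ * ∑ i, (Y i ω) ^ 2
      + 2 * (hatgv ψ n X Y m ω ⬝ᵥ ((hatGam ψ n X m ω)⁻¹ *ᵥ hatgv ψ n X Y m ω)))
    * hatVmax ψ lc n X m ω * ((1 + Real.log n) / n)

/-- Contrast `κ_m`. -/
def contrast (ψ : HilbertBasis ℕ ℝ H) (lc : ℕ → ℝ) (n : ℕ) (X : Fin n → Ω → H)
    (Y : Fin n → Ω → ℝ) (m : ℕ) (ω : Ω) : ℝ :=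
  sSup {x | ∃ k, m ≤ k ∧ k ≤ Mhat ψ lc n X ω ∧
    x = (hatell ψ lc n X Y k ω - hatell ψ lc n X Y m ω) ^ 2 - hatpen ψ lc n X Y k ω}

/-- The fully data-driven dimension `m̂` (smallest minimizer of `κ + p̂`). -/
def mhat (ψ : HilbertBasis ℕ ℝ H) (lc : ℕ → ℝ) (n : ℕ) (X : Fin n → Ω → H)
    (Y : Fin n → Ω → ℝ) (ω : Ω) : ℕ :=
  sInf {m | 1 ≤ m ∧ m ≤ Mhat ψ lc n X ω ∧ ∀ k, 1 ≤ k → k ≤ Mhat ψ lc n X ω →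
    contrast ψ lc n X Y m ω + hatpen ψ lc n X Y m ω ≤
      contrast ψ lc n X Y k ω + hatpen ψ lc n X Y k ω}

/-- The functional linear model with jointly Gaussian regressor and error,
observed through an i.i.d. sample of size `n`. -/
structure FLModel [MeasurableSpace H] (ψ : HilbertBasis ℕ ℝ H)
    (σ : ℝ) (φ : H) (Γ : H →L[ℝ] H)
    [MeasurableSpace Ω] (P : Measure Ω) (n : ℕ)
    (X : Fin n → Ω → H) (Y : Fin n → Ω → ℝ) (ε : Fin n → Ω → ℝ) : Prop where
  measX : ∀ i, Measurable (X i)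
  measEps : ∀ i, Measurable (ε i)
  modelEq : ∀ i ω, Y i ω = ⟪φ, X i ω⟫ + σ * ε i ω
  indep : ProbabilityTheory.iIndepFun (fun i ω => (X i ω, ε i ω)) P
  identDistrib : ∀ i j, Measure.map (fun ω => (X i ω, ε i ω)) P
      = Measure.map (fun ω => (X j ω, ε j ω)) P
  centeredX : ∀ i (h : H), ∫ ω, ⟪X i ω, h⟫ ∂P = 0
  sqIntX : ∀ i, Integrable (fun ω => ‖X i ω‖ ^ 2) P
  epsMean : ∀ i, ∫ ω, ε i ω ∂P = 0
  epsVar : ∀ i, ∫ ω, (ε i ω) ^ 2 ∂P = 1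
  uncorr : ∀ i (h : H), ∫ ω, ε i ω * ⟪X i ω, h⟫ ∂P = 0
  gaussian : ∀ i (k : ℕ) (hs : Fin k → H) (c : Fin k → ℝ) (c' : ℝ), ∃ v : NNReal,
      Measure.map (fun ω => (∑ j, c j * ⟪X i ω, hs j⟫) + c' * ε i ω) P
        = ProbabilityTheory.gaussianReal 0 v
  covOp : ∀ i (h h' : H), ⟪Γ h, h'⟫ = ∫ ω, ⟪X i ω, h⟫ * ⟪X i ω, h'⟫ ∂P

namespace Matrix

variable {n : Type*} [Fintype n] [DecidableEq n]

theorem isUnit_det_and_norm_toEuclideanCLM_inv_le {M : Matrix n n ℝ} {α : ℝ} (hα : 0 < α)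
    (hM : ∀ v : n → ℝ, α * (v ⬝ᵥ v) ≤ v ⬝ᵥ (M *ᵥ v)) :
    IsUnit M.det ∧ ‖toEuclideanCLM (𝕜 := ℝ) M⁻¹‖ ≤ α⁻¹ := by
  set L := toEuclideanCLM (𝕜 := ℝ) M
  have hα' : 0 < α.toNNReal := Real.toNNReal_pos.2 hα
  have hL : ∀ x, ‖x‖ ^ 2 * α.toNNReal ≤ ‖⟪L x, x⟫‖ := fun x => by
    rw [real_inner_comm, inner_toEuclideanCLM, Real.coe_toNNReal _ hα.le,
      ← real_inner_self_eq_norm_sq, mul_comm]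
    exact (hM x).trans (Real.le_norm_self _)
  have hdet : IsUnit M.det := by
    rw [← isUnit_iff_isUnit_det, ← MulEquiv.isUnit_map (toEuclideanCLM (n := n) (𝕜 := ℝ))]
    exact ContinuousLinearMap.isUnit_of_forall_le_norm_inner_map L hα' hL
  refine ⟨hdet, ContinuousLinearMap.opNorm_le_bound _ (inv_nonneg.2 hα.le) fun w => ?_⟩
  have hLinv : L (toEuclideanCLM (𝕜 := ℝ) M⁻¹ w) = w := by
    rw [← mul_apply_eq_comp, ← map_mul, mul_nonsing_inv _ hdet, map_one, one_apply_eq_self]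
  have := (ContinuousLinearMap.antilipschitz_of_forall_le_inner_map L hα' hL).le_mul_dist
    (toEuclideanCLM (𝕜 := ℝ) M⁻¹ w) 0
  simpa [hLinv, Real.coe_toNNReal _ hα.le] using this
end Matrix

namespace ContinuousLinearMap

variable {E : Type*} [NormedAddCommGroup E] [InnerProductSpace ℝ E]

theorem IsPositive.inner_map_sq_le {T : E →L[ℝ] E} (hT : T.IsPositive) (x y : E) :
    ⟪T x, y⟫ ^ 2 ≤ ⟪T x, x⟫ * ⟪T y, y⟫ := by
  have hquad : ∀ r : ℝ, 0 ≤ ⟪T x, x⟫ * (r * r) + 2 * ⟪T x, y⟫ * r + ⟪T y, y⟫ := by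
    intro r
    have := hT.inner_nonneg_left (y + r • x)
    simp only [map_add, map_smul, inner_add_left, inner_add_right, real_inner_smul_left,
      real_inner_smul_right, hT.inner_left_eq_inner_right y x, real_inner_comm (T x) y] at this
    linarith
  have := discrim_le_zero hquad
  rw [discrim] at this
  linarith

theorem IsPositive.mul_norm_sq_le_inner_map_self [CompleteSpace E] {T : E →L[ℝ] E}
    (hT : T.IsPositive) {g : ℝ} (hg : 0 < g) {x : E}
    (hx : ∀ y, 2 * ⟪x, y⟫ - ‖T y‖ ^ 2 ≤ ‖x‖ ^ 2 / g ^ 2) :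
    g / 4 * ‖x‖ ^ 2 ≤ ⟪T x, x⟫ := by
  set t := g ^ 2 / 2
  have ht : 0 < t := by positivity
  -- `T y` with `A y = x` is a regularized preimage of `x` under `T`.
  set A := T * T + t • (1 : E →L[ℝ] E)
  have hA : ∀ y, ⟪A y, y⟫ = ‖T y‖ ^ 2 + t * ‖y‖ ^ 2 := fun y => by
    simp [A, mul_apply_eq_comp, inner_add_left, real_inner_smul_left,
      hT.inner_left_eq_inner_right (T y)]
  have hAunit : IsUnit A := by
    refine isUnit_of_forall_le_norm_inner_map A (c := t.toNNReal) (by simpa using ht) fun y => ?_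
    rw [hA, Real.coe_toNNReal _ ht.le]
    nlinarith [Real.le_norm_self (‖T y‖ ^ 2 + t * ‖y‖ ^ 2), sq_nonneg ‖T y‖]
  obtain ⟨y, hy⟩ := (isUnit_iff_bijective.mp hAunit).2 x
  have hTTy : T (T y) = x - t • y := by
    rw [← hy]; simp [A, mul_apply_eq_comp]
  have hxy : ⟪x, y⟫ = ‖T y‖ ^ 2 + t * ‖y‖ ^ 2 := by rw [← hy, hA]
  have hxy_le : ⟪x, y⟫ ≤ ‖x‖ ^ 2 / g ^ 2 := by
    have := hx y
    nlinarith [sq_nonneg ‖y‖]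
  have hTTy_norm : ‖T (T y)‖ ≤ ‖x‖ := by
    refine (sq_le_sq₀ (norm_nonneg _) (norm_nonneg _)).1 ?_
    rw [hTTy, norm_sub_sq_real, real_inner_smul_right, norm_smul, mul_pow, Real.norm_eq_abs,
      sq_abs]
    nlinarith [sq_nonneg ‖T y‖]
  have hTy_norm : ‖T y‖ ≤ ‖x‖ / g := by
    refine (sq_le_sq₀ (norm_nonneg _) (by positivity)).1 ?_
    rw [div_pow]
    nlinarith [sq_nonneg ‖y‖]
  have h_inner_TTy_Ty : ⟪T (T y), T y⟫ ≤ ‖x‖ * (‖x‖ / g) :=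
    (real_inner_le_norm _ _).trans (mul_le_mul hTTy_norm hTy_norm (norm_nonneg _) (norm_nonneg _))
  have h_inner_TTy_x : ‖x‖ ^ 2 / 2 ≤ ⟪T (T y), x⟫ := by
    rw [hTTy, inner_sub_left, real_inner_smul_left, real_inner_self_eq_norm_sq, real_inner_comm]
    have : t * ⟪x, y⟫ ≤ t * (‖x‖ ^ 2 / g ^ 2) := mul_le_mul_of_nonneg_left hxy_le ht.le
    have : t * (‖x‖ ^ 2 / g ^ 2) = ‖x‖ ^ 2 / 2 := by simp only [t]; field_simp
    linarith
  have hTx_nonneg := hT.inner_nonneg_left x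
  rcases (norm_nonneg x).eq_or_lt with hx0 | hx0
  · rw [← hx0]; simpa using hTx_nonneg
  · refine le_of_mul_le_mul_left ?_ (by positivity : 0 < ‖x‖ * (‖x‖ / g))
    calc ‖x‖ * (‖x‖ / g) * (g / 4 * ‖x‖ ^ 2)
        = (‖x‖ ^ 2 / 2) ^ 2 := by field_simp; ring
      _ ≤ ⟪T (T y), x⟫ ^ 2 := pow_le_pow_left₀ (by positivity) h_inner_TTy_x 2
      _ ≤ ⟪T (T y), T y⟫ * ⟪T x, x⟫ := hT.inner_map_sq_le (T y) x
      _ ≤ ‖x‖ * (‖x‖ / g) * ⟪T x, x⟫ := mul_le_mul_of_nonneg_right h_inner_TTy_Ty hTx_nonneg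

end ContinuousLinearMap

section

variable {E : Type*} [NormedAddCommGroup E] [InnerProductSpace ℝ E]

theorem Orthonormal.two_inner_sum_sub_le {m : ℕ} {e : Fin m → E} (he : Orthonormal ℝ e)
    (v : Fin m → ℝ) (y : E) {g : ℝ} (hg : 0 < g) :
    2 * ⟪∑ j, v j • e j, y⟫ - g ^ 2 * ∑ j, ⟪y, e j⟫ ^ 2 ≤
      ‖∑ j, v j • e j‖ ^ 2 / g ^ 2 := by
  rw [← real_inner_self_eq_norm_sq, he.inner_sum, sum_inner, Finset.mul_sum, Finset.mul_sum,
    Finset.sum_div, ← Finset.sum_sub_distrib]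
  refine Finset.sum_le_sum fun j _ => ?_
  rw [real_inner_smul_left, real_inner_comm, conj_trivial, le_div_iff₀ (by positivity)]
  nlinarith [sq_nonneg (v j - g ^ 2 * ⟪y, e j⟫)]

end

section

variable {E : Type} [NormedAddCommGroup E] [InnerProductSpace ℝ E] (ψ : HilbertBasis ℕ ℝ E)

theorem dotProduct_opMat_mulVec (T : E →L[ℝ] E) {m : ℕ} (v : Fin m → ℝ) :
    v ⬝ᵥ (opMat ψ T m *ᵥ v) = ⟪∑ j : Fin m, v j • ψ j, T (∑ j : Fin m, v j • ψ j)⟫ := by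
  simp only [map_sum, map_smul, sum_inner, inner_sum, real_inner_smul_left,
    real_inner_smul_right, dotProduct, mulVec, opMat, of_apply, Finset.mul_sum]
  rw [Finset.sum_comm]
  refine Finset.sum_congr rfl fun j _ => Finset.sum_congr rfl fun k _ => ?_
  ring

variable {ψ} {γ : ℕ → ℝ} {d : ℝ} {T : E →L[ℝ] E}

theorem memG.isPositive (hT : memG ψ γ d T) : T.IsPositive := by
  refine (ContinuousLinearMap.isPositive_iff T).2 ⟨hT.1, fun h => ?_⟩
  rcases eq_or_ne h 0 with rfl | h0
  · simp
  · exact (hT.2.1 h h0).le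

theorem memG.sq_mul_sum_inner_sq_le (hT : memG ψ γ d T) (hγpos : ∀ j, 0 < γ j)
    (hγanti : Antitone γ) (m : ℕ) (y : E) :
    (γ (m - 1) / d) ^ 2 * ∑ j : Fin m, ⟪y, ψ j⟫ ^ 2 ≤ ‖T y‖ ^ 2 := by
  have hsum : Summable fun j => γ j ^ 2 * ⟪y, ψ j⟫ ^ 2 := by
    refine .of_nonneg_of_le (fun j => by positivity) (fun j => ?_)
      ((ψ.orthonormal.inner_products_summable y).mul_left (γ 0 ^ 2))
    rw [Real.norm_eq_abs, sq_abs, real_inner_comm]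
    gcongr
    exacts [(hγpos j).le, hγanti (Nat.zero_le j)]
  calc (γ (m - 1) / d) ^ 2 * ∑ j : Fin m, ⟪y, ψ j⟫ ^ 2
      ≤ (d ^ 2)⁻¹ * ∑ j ∈ Finset.range m, γ j ^ 2 * ⟪y, ψ j⟫ ^ 2 := by
        rw [Finset.mul_sum, Finset.mul_sum, ← Fin.sum_univ_eq_sum_range]
        refine Finset.sum_le_sum fun j _ => ?_
        rw [div_pow, div_eq_inv_mul, mul_assoc]
        gcongr
        exacts [(hγpos _).le, hγanti (Nat.le_sub_one_of_lt j.isLt)]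
    _ ≤ (d ^ 2)⁻¹ * ∑' j, γ j ^ 2 * ⟪y, ψ j⟫ ^ 2 := by
        gcongr
        exact hsum.sum_le_tsum _ fun j _ => by positivity
    _ ≤ ‖T y‖ ^ 2 := (hT.2.2.2 y).1

theorem memG.mul_dotProduct_self_le_dotProduct_opMat_mulVec [CompleteSpace E]
    (hT : memG ψ γ d T) (hd : 0 < d) (hγpos : ∀ j, 0 < γ j) (hγanti : Antitone γ)
    {m : ℕ} (v : Fin m → ℝ) :
    γ (m - 1) / (4 * d) * (v ⬝ᵥ v) ≤ v ⬝ᵥ (opMat ψ T m *ᵥ v) := by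
  have hg : 0 < γ (m - 1) / d := div_pos (hγpos _) hd
  have he : Orthonormal ℝ fun j : Fin m => ψ j := ψ.orthonormal.comp _ Fin.val_injective
  have hcoer := hT.isPositive.mul_norm_sq_le_inner_map_self hg (x := ∑ j : Fin m, v j • ψ j)
    fun y => (he.two_inner_sum_sub_le v y hg).trans' <|
      sub_le_sub_left (hT.sq_mul_sum_inner_sq_le hγpos hγanti m y) _
  rw [dotProduct_opMat_mulVec, real_inner_comm]
  convert hcoer using 2
  · ring
  · rw [← real_inner_self_eq_norm_sq, he.inner_sum]
    simp [dotProduct]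

end

theorem stmt_4_general (ψ : HilbertBasis ℕ ℝ H) (γ : ℕ → ℝ) (d : ℝ) (hd : 1 ≤ d)
    (hγpos : ∀ j, 0 < γ j) (hγanti : Antitone γ)
    (T : H →L[ℝ] H) (hT : memG ψ γ d T) :
    ∀ m : ℕ, 1 ≤ m → IsUnit (opMat ψ T m).det ∧
      γ (m - 1) * specNorm (opMat ψ T m)⁻¹ ≤ 4 * d ^ 3 := by
  intro m _
  have hd0 : 0 < d := zero_lt_one.trans_le hd
  have hα : 0 < γ (m - 1) / (4 * d) := by have := hγpos (m - 1); positivity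
  obtain ⟨hdet, hinv⟩ := isUnit_det_and_norm_toEuclideanCLM_inv_le hα
    (hT.mul_dotProduct_self_le_dotProduct_opMat_mulVec hd0 hγpos hγanti)
  refine ⟨hdet, ?_⟩
  calc γ (m - 1) * specNorm (opMat ψ T m)⁻¹ ≤ γ (m - 1) * (γ (m - 1) / (4 * d))⁻¹ :=
        mul_le_mul_of_nonneg_left hinv (hγpos _).le
    _ = 4 * d := by field_simp [(hγpos (m - 1)).ne']
    _ ≤ 4 * d ^ 3 := by gcongr; exact le_self_pow₀ hd (by norm_num)

/-- Lemma B.1, (B.1): `sup_m γ_m ‖[T]_m⁻¹‖ ≤ 4d³`; in particular every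
Galerkin matrix `[T]_m` is invertible. (0-indexed: `γ_m = γ (m-1)`.) -/
theorem stmt_4 (ψ : HilbertBasis ℕ ℝ H) (γ : ℕ → ℝ) (d : ℝ) (hd : 1 ≤ d)
    (hγ1 : γ 0 = 1) (hγpos : ∀ j, 0 < γ j) (hγanti : Antitone γ)
    (hγ0 : Filter.Tendsto γ Filter.atTop (nhds 0)) (hγsum : Summable γ)
    (T : H →L[ℝ] H) (hT : memG ψ γ d T) :
    ∀ m : ℕ, 1 ≤ m → IsUnit (opMat ψ T m).det ∧
      γ (m - 1) * specNorm (opMat ψ T m)⁻¹ ≤ 4 * d ^ 3 :=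
  stmt_4_general ψ γ d hd hγpos hγanti T hT

end
end

section
/- Let T ∈ G_γ^d, where the sequence γ is strictly positive, non-increasing with limit zero, summable, and γ_1 = 1. Then sup_{m∈ℕ} ‖ [∇_γ]_m^{−1/2} [T]_m [∇_γ]_m^{−1/2} ‖ ≤ d, where [∇_γ]_m is the m×m diagonal matrix with diagonal entries γ_1,…,γ_m and ‖·‖ is the spectral norm. -/
open scoped RealInnerProductSpace Classical ENNReal NNReal
open Matrix MeasureTheory

noncomputable section

variable {H : Type} [NormedAddCommGroup H] [InnerProductSpace ℝ H] [CompleteSpace H]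

variable {Ω : Type}

/-! For `h = ∑_{k<m} v_k ψ_k`, Bessel's inequality and the upper bound in the definition of
`G_γ^d` give `‖[T]_m v‖ ≤ d ‖[∇_γ]_m v‖`, that is `‖[T]_m [∇_γ]_m⁻¹‖ ≤ d`. With
`D = [∇_γ]_m^{-1/2}`, the symmetric matrix `D [T]_m D = D ([T]_m D)` has the same spectral radius
as `([T]_m D) D = [T]_m [∇_γ]_m⁻¹`, and the spectral norm of a symmetric matrix is its spectral
radius. -/

open Filter
open scoped Matrix.Norms.L2Operator

section CStarRing

variable {E : Type*} [NormedRing E] [StarRing E] [CStarRing E]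

theorem IsSelfAdjoint.norm_le_of_eventually_norm_pow_le {a : E} (ha : IsSelfAdjoint a)
    {C d : ℝ} (hd : 0 < d) (h : ∀ᶠ n in atTop, ‖a ^ n‖ ≤ C * d ^ n) : ‖a‖ ≤ d := by
  by_contra! had
  have hr : 1 < ‖a‖ / d := (one_lt_div hd).2 had
  have htwo : Tendsto (fun n : ℕ => 2 ^ n) atTop atTop :=
    tendsto_pow_atTop_atTop_of_one_lt one_lt_two
  have hgrow : Tendsto (fun n => (‖a‖ / d) ^ 2 ^ n) atTop atTop :=
    (tendsto_pow_atTop_atTop_of_one_lt hr).comp htwo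
  have hbdd : ∀ᶠ n in atTop, (‖a‖ / d) ^ 2 ^ n ≤ C := by
    filter_upwards [htwo.eventually h] with n hn
    rwa [div_pow, div_le_iff₀ (by positivity), ← ha.norm_pow_two_pow]
  obtain ⟨n, hgt, hle⟩ := ((hgrow.eventually_gt_atTop C).and hbdd).exists
  exact hgt.not_ge hle

theorem IsSelfAdjoint.norm_mul_le_norm_mul_comm {x y : E} (h : IsSelfAdjoint (x * y)) :
    ‖x * y‖ ≤ ‖y * x‖ := by
  rcases subsingleton_or_nontrivial E with hE | hE
  · rw [Subsingleton.elim (x * y) (y * x)]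
  refine le_of_forall_gt_imp_ge_of_dense fun d hd => ?_
  have hd0 : 0 < d := (norm_nonneg _).trans_lt hd
  refine h.norm_le_of_eventually_norm_pow_le (C := ‖x‖ * ‖y‖ / d) hd0
    (eventually_atTop.2 ⟨1, fun n hn => ?_⟩)
  obtain ⟨k, rfl⟩ := Nat.exists_eq_add_of_le' hn
  calc ‖(x * y) ^ (k + 1)‖ = ‖x * (y * x) ^ k * y‖ := by
        rw [pow_succ, ← mul_assoc, mul_pow_mul]
    _ ≤ ‖x‖ * ‖(y * x) ^ k‖ * ‖y‖ := norm_mul₃_le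
    _ ≤ ‖x‖ * d ^ k * ‖y‖ := by
        gcongr
        exact (norm_pow_le _ _).trans (pow_le_pow_left₀ (norm_nonneg _) hd.le _)
    _ = ‖x‖ * ‖y‖ / d * d ^ (k + 1) := by
        field_simp
        ring

end CStarRing

namespace Matrix

variable {n : Type*} [Fintype n] [DecidableEq n]

theorem IsHermitian.norm_diagonal_mul_mul_diagonal_le {M : Matrix n n ℝ} (hM : M.IsHermitian)
    (s : n → ℝ) : ‖diagonal s * M * diagonal s‖ ≤ ‖M * diagonal (s ^ 2)‖ := by
  have hstar : star (diagonal s) = diagonal s := by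
    rw [star_eq_conjTranspose, diagonal_conjTranspose, star_trivial]
  have hsa : IsSelfAdjoint (diagonal s * (M * diagonal s)) := by
    simpa only [hstar, mul_assoc] using hM.isSelfAdjoint.conjugate (diagonal s)
  rw [mul_assoc]
  refine hsa.norm_mul_le_norm_mul_comm.trans_eq ?_
  rw [mul_assoc, diagonal_mul_diagonal, sq]
  rfl

theorem norm_mul_diagonal_inv_le {M : Matrix n n ℝ} {g : n → ℝ} (hg : ∀ j, g j ≠ 0) {d : ℝ}
    (hd : 0 ≤ d)
    (h : ∀ v, ‖toEuclideanCLM (𝕜 := ℝ) M v‖ ≤ d * ‖toEuclideanCLM (𝕜 := ℝ) (diagonal g) v‖) :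
    ‖M * diagonal g⁻¹‖ ≤ d := by
  have hinv : diagonal g * diagonal g⁻¹ = 1 := by
    rw [diagonal_mul_diagonal, ← diagonal_one]
    congr 1
    ext j
    exact mul_inv_cancel₀ (hg j)
  refine ContinuousLinearMap.opNorm_le_bound _ hd fun v => ?_
  have key := h (toEuclideanCLM (𝕜 := ℝ) (diagonal g⁻¹) v)
  rwa [← mul_apply_eq_comp, ← mul_apply_eq_comp, ← _root_.map_mul,
    ← _root_.map_mul, hinv, _root_.map_one, one_apply_eq_self] at key

end Matrix

section Orthonormal

variable {E : Type*} [NormedAddCommGroup E] [InnerProductSpace ℝ E] {e : ℕ → E} {m : ℕ}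

theorem Orthonormal.inner_sum_fin_smul_of_le (he : Orthonormal ℝ e) (v : Fin m → ℝ) {j : ℕ}
    (hj : m ≤ j) : ⟪∑ k : Fin m, v k • e k, e j⟫ = 0 := by
  rw [sum_inner]
  refine Finset.sum_eq_zero fun k _ => ?_
  rw [real_inner_smul_left, he.inner_eq_zero (by omega), mul_zero]

theorem Orthonormal.tsum_mul_inner_sum_fin_smul_sq (he : Orthonormal ℝ e) (w : ℕ → ℝ)
    (v : Fin m → ℝ) :
    ∑' j, w j * ⟪∑ k : Fin m, v k • e k, e j⟫ ^ 2 = ∑ k : Fin m, w k * v k ^ 2 := by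
  have hvanish : ∀ j ∉ Finset.range m, w j * ⟪∑ k : Fin m, v k • e k, e j⟫ ^ 2 = 0 :=
    fun j hj => by rw [he.inner_sum_fin_smul_of_le v (by simpa using hj)]; ring
  rw [tsum_eq_sum hvanish, ← Fin.sum_univ_eq_sum_range]
  refine Finset.sum_congr rfl fun k _ => ?_
  have hcoef := (he.comp _ Fin.val_injective).inner_left_fintype v k
  simp only [Function.comp_apply, conj_trivial] at hcoef
  rw [hcoef]

end Orthonormal

section HilbertBasis

omit [CompleteSpace H]

variable (ψ : HilbertBasis ℕ ℝ H) {m : ℕ}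

theorem opMat_isHermitian {T : H →L[ℝ] H} (hT : ∀ x y, ⟪T x, y⟫ = ⟪x, T y⟫) (m : ℕ) :
    (opMat ψ T m).IsHermitian := by
  ext j k
  simp only [conjTranspose_apply, star_trivial, opMat, of_apply]
  rw [← hT, real_inner_comm]

theorem norm_toEuclideanCLM_opMat_le (T : H →L[ℝ] H) (v : EuclideanSpace ℝ (Fin m)) :
    ‖toEuclideanCLM (𝕜 := ℝ) (opMat ψ T m) v‖ ≤ ‖T (∑ k : Fin m, v k • ψ k)‖ := by
  have hcoord : ∀ j, toEuclideanCLM (𝕜 := ℝ) (opMat ψ T m) v j = ⟪ψ j, T (∑ k, v k • ψ k)⟫ := by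
    intro j
    simp [opMat, mulVec, dotProduct, inner_sum, inner_smul_right, mul_comm]
  refine (sq_le_sq₀ (norm_nonneg _) (norm_nonneg _)).1 ?_
  rw [EuclideanSpace.norm_sq_eq]
  simp only [hcoord]
  exact (ψ.orthonormal.comp _ Fin.val_injective).sum_inner_products_le _

theorem memG.norm_opMat_mul_diagonal_inv_le {γ : ℕ → ℝ} {d : ℝ} {T : H →L[ℝ] H}
    (hT : memG ψ γ d T) (hd : 0 ≤ d) (hγ : ∀ j, γ j ≠ 0) (m : ℕ) :
    ‖opMat ψ T m * diagonal (fun j : Fin m => γ j)⁻¹‖ ≤ d := by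
  refine norm_mul_diagonal_inv_le (fun j : Fin m => hγ j) hd fun v => ?_
  refine (norm_toEuclideanCLM_opMat_le ψ T v).trans
    ((sq_le_sq₀ (norm_nonneg _) (by positivity)).1 ?_)
  have hweighted : ∑' j, γ j ^ 2 * ⟪∑ k : Fin m, v k • ψ k, ψ j⟫ ^ 2 =
      ‖toEuclideanCLM (𝕜 := ℝ) (diagonal fun j : Fin m => γ j) v‖ ^ 2 := by
    rw [ψ.orthonormal.tsum_mul_inner_sum_fin_smul_sq, EuclideanSpace.norm_sq_eq]
    simp [mulVec_diagonal, mul_pow]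
  rw [mul_pow, ← hweighted]
  exact (hT.2.2.2 _).2

end HilbertBasis

theorem stmt_6_general (ψ : HilbertBasis ℕ ℝ H) (γ : ℕ → ℝ) (d : ℝ) (hd : 1 ≤ d)
    (hγpos : ∀ j, 0 < γ j) (T : H →L[ℝ] H) (hT : memG ψ γ d T) :
    ∀ m : ℕ, 1 ≤ m →
      specNorm (Matrix.diagonal (fun j : Fin m => (Real.sqrt (γ (j : ℕ)))⁻¹) *
          opMat ψ T m *
          Matrix.diagonal (fun j : Fin m => (Real.sqrt (γ (j : ℕ)))⁻¹)) ≤ d := by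
  intro m _
  have hsq : (fun j : Fin m => (√(γ j))⁻¹) ^ 2 = (fun j : Fin m => γ j)⁻¹ := by
    ext j
    simp [inv_pow, Real.sq_sqrt (hγpos j).le]
  calc specNorm _ ≤ ‖opMat ψ T m * diagonal ((fun j : Fin m => (√(γ j))⁻¹) ^ 2)‖ :=
        (opMat_isHermitian ψ hT.1 m).norm_diagonal_mul_mul_diagonal_le _
    _ ≤ d := hsq ▸ hT.norm_opMat_mul_diagonal_inv_le ψ (by linarith) (fun j => (hγpos j).ne') m

/-- Lemma B.1, (B.3): `sup_m ‖[∇_γ]_m^{-1/2} [T]_m [∇_γ]_m^{-1/2}‖ ≤ d`. -/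
theorem stmt_6 (ψ : HilbertBasis ℕ ℝ H) (γ : ℕ → ℝ) (d : ℝ) (hd : 1 ≤ d)
    (hγ1 : γ 0 = 1) (hγpos : ∀ j, 0 < γ j) (hγanti : Antitone γ)
    (hγ0 : Filter.Tendsto γ Filter.atTop (nhds 0)) (hγsum : Summable γ)
    (T : H →L[ℝ] H) (hT : memG ψ γ d T) :
    ∀ m : ℕ, 1 ≤ m →
      specNorm (Matrix.diagonal (fun j : Fin m => (Real.sqrt (γ (j : ℕ)))⁻¹) *
          opMat ψ T m *
          Matrix.diagonal (fun j : Fin m => (Real.sqrt (γ (j : ℕ)))⁻¹)) ≤ d :=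
  stmt_6_general ψ γ d hd hγpos T hT

end
end

section
/- Let T ∈ G_γ^d with γ strictly positive, non-increasing with limit zero, summable, and γ_1 = 1, and let φ ∈ F_β^r with β non-decreasing, β_1 = 1, and 1/β converging to zero. Let φ_m be the Galerkin solution of g = Tφ, i.e. the element of span(ψ_1,…,ψ_m) with [φ_m]_m = [T]_m^{−1}[g]_m where g := Tφ. Then for any strictly positive sequence w = (w_j) such that (w_j/β_j) is non-increasing, and all m ∈ ℕ: ‖φ − φ_m‖_w² ≤ 34·d⁸·r·(w_m/β_m)·max( 1, (γ_m²/w_m)·max_{1≤j≤m}(w_j/γ_j²) ), where ‖h‖_w² := Σ_j w_j⟨h,ψ_j⟩². -/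
open scoped RealInnerProductSpace Classical ENNReal NNReal
open Matrix MeasureTheory

noncomputable section

variable {H : Type} [NormedAddCommGroup H] [InnerProductSpace ℝ H] [CompleteSpace H]

variable {Ω : Type}

/-!
Indices start at `0`. Put `e = φ - galerkin ψ T φ m` and let `D` be the diagonal operator
`D ψ j = γ j • ψ j`. Galerkin orthogonality gives `⟪T e, ψ k⟫ = 0` for `k < m`, while the
coefficients of `e` from `m` on are those of `φ`. The sandwich condition reads
`T ^ 2 ≤ d ^ 2 • D ^ 2`, and its square-root form `T ≤ d • D` gives
`∑ ⟪T e, ψ j⟫ ^ 2 / γ j ≤ d * ⟪T e, e⟫`. Only `j ≥ m` contributes on the left and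
`⟪T e, e⟫ = ⟪T e, ρ⟫` for the tail `ρ` of `e`, so `‖T e‖ ≤ d * γ m * ‖ρ‖`, where
`‖ρ‖ ^ 2 ≤ r / β m`. The lower sandwich bound turns this into
`∑ γ j ^ 2 * ⟪e, ψ j⟫ ^ 2 ≤ d ^ 4 * γ m ^ 2 * r / β m`, which controls the first `m` weighted
coefficients through `max_{j < m} w j / γ j ^ 2`; the remaining ones are those of `φ`, bounded by
`w (m - 1) / β (m - 1) * r` because `w / β` is non-increasing.
-/

lemma le_mul_of_sq_le_mul_of_le_mul_pow {g : ℕ → ℝ} {c d : ℝ} (hd : 0 ≤ d) (hg : ∀ k, 0 ≤ g k)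
    (hlog : ∀ k, g (k + 1) ^ 2 ≤ g k * g (k + 2)) (hbd : ∀ k, g k ≤ c * d ^ k) :
    g 1 ≤ d * g 0 := by
  by_contra! h
  have hg0 : 0 < g 0 := by
    refine (hg 0).lt_of_ne fun h0 => ?_
    have := hlog 0
    rw [← h0, zero_mul] at this
    rw [← h0, mul_zero] at h
    nlinarith
  set q := g 1 / g 0
  have hdq : d < q := by rwa [lt_div_iff₀ hg0]
  have hq : 0 < q := hd.trans_lt hdq
  have hratio (k : ℕ) : 0 < g k ∧ q * g k ≤ g (k + 1) := by
    induction k with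
    | zero => exact ⟨hg0, (div_mul_cancel₀ _ hg0.ne').le⟩
    | succ k ih =>
      obtain ⟨hk, hqk⟩ := ih
      have hk1 : 0 < g (k + 1) := (mul_pos hq hk).trans_le hqk
      refine ⟨hk1, le_of_mul_le_mul_left ?_ hk⟩
      calc g k * (q * g (k + 1)) = q * g k * g (k + 1) := by ring
        _ ≤ g (k + 1) ^ 2 := by rw [sq]; exact mul_le_mul_of_nonneg_right hqk hk1.le
        _ ≤ g k * g (k + 2) := hlog k
  have hgeom (k : ℕ) : g 0 ≤ c * (d / q) ^ k := by
    have hlow : g 0 * q ^ k ≤ g k := by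
      induction k with
      | zero => simp
      | succ k ih =>
        rw [pow_succ, ← mul_assoc, mul_comm _ q]
        exact (mul_le_mul_of_nonneg_left ih hq.le).trans (hratio k).2
    rw [div_pow, mul_div_assoc', le_div_iff₀ (pow_pos hq k)]
    exact hlow.trans (hbd k)
  have hlim : Filter.Tendsto (fun k => c * (d / q) ^ k) Filter.atTop (nhds 0) := by
    simpa using (tendsto_pow_atTop_nhds_zero_of_lt_one (div_nonneg hd hq.le)
      ((div_lt_one hq).2 hdq)).const_mul c
  exact hg0.not_ge (ge_of_tendsto' hlim hgeom)

section InnerProductSpace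

variable {E : Type*} [NormedAddCommGroup E] [InnerProductSpace ℝ E]

namespace HilbertBasis

variable {ι : Type*} (ψ : HilbertBasis ι ℝ E)

lemma summable_inner_sq (x : E) : Summable fun j => ⟪x, ψ j⟫ ^ 2 :=
  (ψ.summable_inner_mul_inner x x).congr fun j => by rw [sq, real_inner_comm x]

lemma tsum_inner_sq (x : E) : ∑' j, ⟪x, ψ j⟫ ^ 2 = ‖x‖ ^ 2 := by
  rw [← real_inner_self_eq_norm_sq, ← ψ.tsum_inner_mul_inner x x]
  exact tsum_congr fun j => by rw [sq, real_inner_comm x]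

lemma summable_mul_inner_sq {a : ι → ℝ} {c : ℝ} (ha : ∀ j, |a j| ≤ c) (x : E) :
    Summable fun j => a j * ⟪x, ψ j⟫ ^ 2 :=
  ((ψ.summable_inner_sq x).mul_left c).of_norm_bounded fun j => by
    rw [norm_mul, Real.norm_eq_abs, Real.norm_eq_abs, abs_sq]
    exact mul_le_mul_of_nonneg_right (ha j) (sq_nonneg _)

lemma inner_sum_smul [DecidableEq ι] (s : Finset ι) (c : ι → ℝ) (k : ι) :
    ⟪∑ j ∈ s, c j • ψ j, ψ k⟫ = if k ∈ s then c k else 0 := by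
  simp [sum_inner, real_inner_smul_left, orthonormal_iff_ite.mp ψ.orthonormal]

lemma ext_inner {x y : E} (h : ∀ j, ⟪x, ψ j⟫ = ⟪y, ψ j⟫) : x = y :=
  ψ.repr.injective <| lp.ext <| funext fun j => by
    simp only [ψ.repr_apply_apply, real_inner_comm x, real_inner_comm y, h]

end HilbertBasis

lemma ContinuousLinearMap.IsPositive.inner_apply_sq_le {S : E →L[ℝ] E} (hS : S.IsPositive)
    (u v : E) : ⟪S u, v⟫ ^ 2 ≤ ⟪S u, u⟫ * ⟪S v, v⟫ := by
  have hvu : ⟪S v, u⟫ = ⟪S u, v⟫ := by rw [hS.inner_left_eq_inner_right, real_inner_comm]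
  have hquad : ∀ t : ℝ, 0 ≤ ⟪S v, v⟫ * (t * t) + 2 * ⟪S u, v⟫ * t + ⟪S u, u⟫ := fun t => by
    have := hS.inner_nonneg_left (u + t • v)
    simp only [map_add, map_smul, inner_add_left, inner_add_right, real_inner_smul_left,
      real_inner_smul_right, hvu] at this
    linarith
  have := discrim_le_zero hquad
  rw [discrim] at this
  nlinarith

/-- The moments `g k = ⟪T (C^[k] x), x⟫` are log-convex (Cauchy–Schwarz for the positive forms of
`T` and `T ∘L C`, alternately) and grow at most like `‖C‖ ^ k`, so `g 1 ≤ ‖C‖ * g 0`. -/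
lemma ContinuousLinearMap.IsPositive.inner_comp_apply_le {T C : E →L[ℝ] E} (hT : T.IsPositive)
    (hTC : (T ∘L C).IsPositive) (x : E) : ⟪T (C x), x⟫ ≤ ‖C‖ * ⟪T x, x⟫ := by
  set xs : ℕ → E := fun k => C^[k] x
  have hxs (k : ℕ) : xs (k + 1) = C (xs k) := Function.iterate_succ_apply' _ _ _
  have hswap (u v : E) : ⟪T u, C v⟫ = ⟪T (C u), v⟫ :=
    (hT.inner_left_eq_inner_right u (C v)).trans (hTC.inner_left_eq_inner_right u v).symm
  set g : ℕ → ℝ := fun k => ⟪T (xs k), x⟫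
  have hshift (a b : ℕ) : ⟪T (xs a), xs b⟫ = g (a + b) := by
    induction b generalizing a with
    | zero => rfl
    | succ b ih => rw [hxs, hswap, ← hxs, ih, add_right_comm, add_assoc]
  have hshift' (a b : ℕ) : ⟪(T ∘L C) (xs a), xs b⟫ = g (a + b + 1) := by
    rw [comp_apply, ← hxs, hshift, add_right_comm]
  have hg (k : ℕ) : 0 ≤ g k := by
    obtain ⟨a, rfl | rfl⟩ := Nat.even_or_odd' k
    · rw [two_mul, ← hshift]; exact hT.inner_nonneg_left _
    · rw [two_mul, ← hshift']; exact hTC.inner_nonneg_left _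
  have hlog (k : ℕ) : g (k + 1) ^ 2 ≤ g k * g (k + 2) := by
    obtain ⟨a, rfl | rfl⟩ := Nat.even_or_odd' k
    · have := hT.inner_apply_sq_le (xs a) (xs (a + 1))
      rwa [hshift, hshift, hshift, show a + (a + 1) = 2 * a + 1 by ring,
        show a + a = 2 * a by ring, show a + 1 + (a + 1) = 2 * a + 2 by ring] at this
    · have := hTC.inner_apply_sq_le (xs a) (xs (a + 1))
      rwa [hshift', hshift', hshift', show a + (a + 1) + 1 = 2 * a + 1 + 1 by ring,
        show a + a + 1 = 2 * a + 1 by ring, show a + 1 + (a + 1) + 1 = 2 * a + 1 + 2 by ring]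
        at this
  have hxs_le (k : ℕ) : ‖xs k‖ ≤ ‖C‖ ^ k * ‖x‖ := by
    induction k with
    | zero => simp [xs]
    | succ k ih =>
      rw [hxs, pow_succ', mul_assoc]
      exact (C.le_opNorm _).trans (mul_le_mul_of_nonneg_left ih (norm_nonneg C))
  have hbd (k : ℕ) : g k ≤ ‖T‖ * ‖x‖ ^ 2 * ‖C‖ ^ k :=
    calc g k ≤ ‖T (xs k)‖ * ‖x‖ := real_inner_le_norm _ _
      _ ≤ ‖T‖ * (‖C‖ ^ k * ‖x‖) * ‖x‖ := by
        gcongr; exact (T.le_opNorm _).trans (by gcongr; exact hxs_le k)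
      _ = ‖T‖ * ‖x‖ ^ 2 * ‖C‖ ^ k := by ring
  simpa [g, xs] using le_mul_of_sq_le_mul_of_le_mul_pow (norm_nonneg C) hg hlog hbd

section DiagonalSandwich

variable (ψ : HilbertBasis ℕ ℝ E) {γ : ℕ → ℝ} {d : ℝ} {T : E →L[ℝ] E}

lemma sum_sq_inner_apply_div_le (hγ : ∀ j, 0 < γ j) (hT : (T : E →ₗ[ℝ] E).IsSymmetric)
    (hTle : ∀ h, ‖T h‖ ^ 2 ≤ d ^ 2 * ∑' j, γ j ^ 2 * ⟪h, ψ j⟫ ^ 2) (u : E) (s : Finset ℕ) :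
    ∑ j ∈ s, (⟪T u, ψ j⟫ / γ j) ^ 2 ≤ d ^ 2 * ‖u‖ ^ 2 := by
  classical
  -- test the upper bound on `v`: then `q = ⟪u, T v⟫ ≤ ‖u‖ * ‖T v‖ ≤ ‖u‖ * d * √q`
  set q := ∑ j ∈ s, (⟪T u, ψ j⟫ / γ j) ^ 2
  set v := ∑ j ∈ s, (⟪T u, ψ j⟫ / γ j ^ 2) • ψ j
  have hv (k : ℕ) : ⟪v, ψ k⟫ = if k ∈ s then ⟪T u, ψ k⟫ / γ k ^ 2 else 0 :=
    ψ.inner_sum_smul s _ k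
  have hsym : ⟪T u, v⟫ = ⟪u, T v⟫ := hT u v
  have hq : ⟪u, T v⟫ = q := by
    rw [← hsym, inner_sum]
    refine Finset.sum_congr rfl fun j _ => ?_
    rw [real_inner_smul_right]
    field_simp [(hγ j).ne']
  have hTv : ‖T v‖ ^ 2 ≤ d ^ 2 * q := by
    refine (hTle v).trans_eq ?_
    rw [tsum_eq_sum (s := s) fun k hk => by rw [hv, if_neg hk]; ring]
    congr 1
    refine Finset.sum_congr rfl fun k hk => ?_
    rw [hv, if_pos hk]
    field_simp [(hγ k).ne']
  have hq_le : q ≤ ‖u‖ * ‖T v‖ := hq ▸ real_inner_le_norm u (T v)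
  have hq0 : 0 ≤ q := Finset.sum_nonneg fun j _ => sq_nonneg _
  have hq_sq : q ^ 2 ≤ ‖u‖ ^ 2 * (d ^ 2 * q) :=
    calc q ^ 2 ≤ (‖u‖ * ‖T v‖) ^ 2 := pow_le_pow_left₀ hq0 hq_le 2
      _ = ‖u‖ ^ 2 * ‖T v‖ ^ 2 := by ring
      _ ≤ ‖u‖ ^ 2 * (d ^ 2 * q) := mul_le_mul_of_nonneg_left hTv (sq_nonneg _)
  rcases hq0.eq_or_lt with hq0 | hq0
  · rw [← hq0]; positivity
  · exact le_of_mul_le_mul_left (by linarith) hq0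

lemma exists_inner_apply_eq_inner_apply_div (hγ : ∀ j, 0 < γ j)
    (hT : (T : E →ₗ[ℝ] E).IsSymmetric)
    (hTle : ∀ h, ‖T h‖ ^ 2 ≤ d ^ 2 * ∑' j, γ j ^ 2 * ⟪h, ψ j⟫ ^ 2) (hd : 0 ≤ d) :
    ∃ C : E →L[ℝ] E, ‖C‖ ≤ d ∧ ∀ u k, ⟪C u, ψ k⟫ = ⟪T u, ψ k⟫ / γ k := by
  have hsum := sum_sq_inner_apply_div_le ψ hγ hT hTle
  have hmem (u : E) : Memℓp (fun j => ⟪T u, ψ j⟫ / γ j) 2 :=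
    memℓp_gen' fun s => by simpa [div_pow, sq_abs] using hsum u s
  let f : E → E := fun u => ψ.repr.symm ⟨_, hmem u⟩
  have hf (u : E) (k : ℕ) : ⟪f u, ψ k⟫ = ⟪T u, ψ k⟫ / γ k := by
    rw [real_inner_comm, ← ψ.repr_apply_apply, LinearIsometryEquiv.apply_symm_apply]
  have hf_le (u : E) : ‖f u‖ ≤ d * ‖u‖ := by
    refine (pow_le_pow_iff_left₀ (norm_nonneg _) (by positivity) two_ne_zero).1 ?_
    rw [← ψ.tsum_inner_sq, mul_pow]
    simp_rw [hf]
    exact Real.tsum_le_of_sum_le (fun j => sq_nonneg _) (hsum u)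
  let L : E →ₗ[ℝ] E :=
    { toFun := f
      map_add' := fun u v => ψ.ext_inner fun k => by simp [hf, inner_add_left, add_div]
      map_smul' := fun c u => ψ.ext_inner fun k => by
        simp [hf, real_inner_smul_left, mul_div_assoc] }
  exact ⟨L.mkContinuous d hf_le, L.mkContinuous_norm_le hd hf_le, hf⟩

/-- The form inequality `T ≤ d • D` for the diagonal operator `D ψ j = γ j • ψ j`, obtained from
`T ^ 2 ≤ d ^ 2 • D ^ 2` through `inner_comp_apply_le` applied to `C = D⁻¹ ∘ T`. -/
lemma summable_inner_apply_sq_div_and_tsum_le (hγ : ∀ j, 0 < γ j) (hT : T.IsPositive)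
    (hTle : ∀ h, ‖T h‖ ^ 2 ≤ d ^ 2 * ∑' j, γ j ^ 2 * ⟪h, ψ j⟫ ^ 2) (hd : 0 ≤ d) (x : E) :
    Summable (fun j => ⟪T x, ψ j⟫ ^ 2 / γ j) ∧ ∑' j, ⟪T x, ψ j⟫ ^ 2 / γ j ≤ d * ⟪T x, x⟫ := by
  obtain ⟨C, hCd, hC⟩ := exists_inner_apply_eq_inner_apply_div ψ hγ hT.isSymmetric hTle hd
  have hTC (u v : E) : ⟪T (C u), v⟫ = ∑' j, ⟪T u, ψ j⟫ * ⟪T v, ψ j⟫ / γ j := by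
    rw [hT.inner_left_eq_inner_right, ← ψ.tsum_inner_mul_inner]
    exact tsum_congr fun j => by rw [hC, real_inner_comm (T v)]; ring
  have hTC_pos : (T ∘L C).IsPositive := by
    refine (ContinuousLinearMap.isPositive_iff _).2 ⟨fun u v => ?_, fun u => ?_⟩
    · change ⟪T (C u), v⟫ = ⟪u, T (C v)⟫
      rw [real_inner_comm (T (C v)), hTC, hTC]
      exact tsum_congr fun j => by ring
    · change 0 ≤ ⟪T (C u), u⟫
      rw [hTC]
      exact tsum_nonneg fun j => div_nonneg (mul_self_nonneg _) (hγ j).le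
  have hsq : (fun j => ⟪T x, ψ j⟫ ^ 2 / γ j) = fun j => ⟪C x, ψ j⟫ * ⟪ψ j, T x⟫ := by
    funext j; rw [hC, real_inner_comm (T x)]; ring
  refine ⟨hsq ▸ ψ.summable_inner_mul_inner _ _, ?_⟩
  calc ∑' j, ⟪T x, ψ j⟫ ^ 2 / γ j = ⟪T (C x), x⟫ := by
        rw [hTC]; exact tsum_congr fun j => by ring
    _ ≤ ‖C‖ * ⟪T x, x⟫ := hT.inner_comp_apply_le hTC_pos x
    _ ≤ d * ⟪T x, x⟫ := mul_le_mul_of_nonneg_right hCd (hT.inner_nonneg_left x)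

lemma norm_apply_sq_le_of_inner_apply_eq_zero (hγ : ∀ j, 0 < γ j) (hγanti : Antitone γ)
    (hT : T.IsPositive) (hTle : ∀ h, ‖T h‖ ^ 2 ≤ d ^ 2 * ∑' j, γ j ^ 2 * ⟪h, ψ j⟫ ^ 2)
    (hd : 0 ≤ d) {m : ℕ} {e : E} (he : ∀ k < m, ⟪T e, ψ k⟫ = 0) :
    ‖T e‖ ^ 2 ≤ (d * γ m) ^ 2 * ∑' j, ⟪e, ψ (j + m)⟫ ^ 2 := by
  classical
  set ρ := e - ∑ j ∈ Finset.range m, ⟪e, ψ j⟫ • ψ j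
  have hρ (k : ℕ) : ⟪ρ, ψ k⟫ = if k < m then 0 else ⟪e, ψ k⟫ := by
    simp only [ρ, inner_sub_left, ψ.inner_sum_smul, Finset.mem_range]
    split_ifs <;> simp
  have hρ_norm : ‖ρ‖ ^ 2 = ∑' j, ⟪e, ψ (j + m)⟫ ^ 2 := by
    rw [← ψ.tsum_inner_sq, ← (ψ.summable_inner_sq ρ).sum_add_tsum_nat_add m,
      Finset.sum_eq_zero fun k hk => by rw [hρ, if_pos (Finset.mem_range.1 hk)]; ring, zero_add]
    exact tsum_congr fun j => by rw [hρ, if_neg (by omega)]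
  have hTe : ⟪T e, e⟫ = ⟪T e, ρ⟫ := by
    rw [inner_sub_right, inner_sum, Finset.sum_eq_zero fun k hk => by
      rw [real_inner_smul_right, he k (Finset.mem_range.1 hk), mul_zero], sub_zero]
  obtain ⟨hsum, hle⟩ := summable_inner_apply_sq_div_and_tsum_le ψ hγ hT hTle hd e
  have hdiv : ‖T e‖ ^ 2 / γ m ≤ d * (‖T e‖ * ‖ρ‖) :=
    calc ‖T e‖ ^ 2 / γ m = ∑' j, ⟪T e, ψ j⟫ ^ 2 / γ m := by rw [← ψ.tsum_inner_sq, tsum_div_const]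
      _ ≤ ∑' j, ⟪T e, ψ j⟫ ^ 2 / γ j := by
        refine (ψ.summable_inner_sq _).div_const _ |>.tsum_le_tsum (fun j => ?_) hsum
        rcases lt_or_ge j m with hj | hj
        · simp [he j hj]
        · exact div_le_div_of_nonneg_left (sq_nonneg _) (hγ j) (hγanti hj)
      _ ≤ d * ⟪T e, e⟫ := hle
      _ ≤ d * (‖T e‖ * ‖ρ‖) := by rw [hTe]; gcongr; exact real_inner_le_norm _ _
  have hnorm : ‖T e‖ ≤ d * γ m * ‖ρ‖ := by
    rw [div_le_iff₀ (hγ m)] at hdiv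
    have hb : 0 ≤ d * γ m * ‖ρ‖ := by have := hγ m; positivity
    nlinarith [norm_nonneg (T e)]
  rw [← hρ_norm, ← mul_pow]
  exact pow_le_pow_left₀ (norm_nonneg _) hnorm 2

end DiagonalSandwich

end InnerProductSpace

section Galerkin

variable {E : Type} [NormedAddCommGroup E] [InnerProductSpace ℝ E] (ψ : HilbertBasis ℕ ℝ E)
  {T : E →L[ℝ] E} {m : ℕ}

lemma opMat_posDef (hT : (T : E →ₗ[ℝ] E).IsSymmetric) (hpos : ∀ h : E, h ≠ 0 → 0 < ⟪T h, h⟫) :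
    (opMat ψ T m).PosDef := by
  refine Matrix.posDef_iff_dotProduct_mulVec.2 ⟨?_, fun x hx => ?_⟩
  · ext j k
    simp only [opMat, Matrix.conjTranspose_apply, Matrix.of_apply, star_trivial]
    exact (real_inner_comm _ _).trans (hT _ _)
  set v := ∑ j : Fin m, x j • ψ j
  have hv : v ≠ 0 := fun hv0 => hx <| funext <|
    Fintype.linearIndependent_iff.1 (ψ.orthonormal.linearIndependent.comp _ Fin.val_injective) x hv0
  have hdot : star x ⬝ᵥ (opMat ψ T m *ᵥ x) = ⟪T v, v⟫ := by
    simp only [v, map_sum, map_smul, sum_inner, inner_sum, real_inner_smul_left,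
      real_inner_smul_right, dotProduct, Matrix.mulVec, opMat, Matrix.of_apply, star_trivial,
      Finset.mul_sum]
    refine Finset.sum_congr rfl fun j _ => Finset.sum_congr rfl fun k _ => ?_
    rw [real_inner_comm]; ring
  exact hdot ▸ hpos v hv

lemma inner_galerkin_of_le (φ : E) {k : ℕ} (hk : m ≤ k) : ⟪galerkin ψ T φ m, ψ k⟫ = 0 := by
  simp only [galerkin, sum_inner, real_inner_smul_left]
  exact Finset.sum_eq_zero fun j _ => by
    rw [ψ.orthonormal.inner_eq_zero (by omega : (j : ℕ) ≠ k), mul_zero]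

lemma inner_apply_sub_galerkin_of_lt (hA : IsUnit (opMat ψ T m)) (φ : E) {k : ℕ} (hk : k < m) :
    ⟪T (φ - galerkin ψ T φ m), ψ k⟫ = 0 := by
  have hsolve : opMat ψ T m *ᵥ galCoef ψ T φ m = gvec ψ T φ m := by
    rw [galCoef, Matrix.mulVec_mulVec,
      Matrix.mul_nonsing_inv _ ((Matrix.isUnit_iff_isUnit_det _).1 hA), Matrix.one_mulVec]
  have hrow : ⟪T (galerkin ψ T φ m), ψ k⟫ = (opMat ψ T m *ᵥ galCoef ψ T φ m) ⟨k, hk⟩ := by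
    simp only [galerkin, map_sum, map_smul, sum_inner, real_inner_smul_left, Matrix.mulVec,
      dotProduct, opMat, Matrix.of_apply]
    exact Finset.sum_congr rfl fun j _ => by rw [real_inner_comm]; ring
  rw [map_sub, inner_sub_left, hrow, hsolve, gvec, sub_self]

section Ellipsoid

variable {ψ} {β w : ℕ → ℝ} {r : ℝ} {φ : E}

lemma memF.tsum_nat_add_le (hφ : memF ψ β r φ) (hβ : ∀ j, 0 ≤ β j) (m : ℕ) :
    ∑' j, β (j + m) * ⟪φ, ψ (j + m)⟫ ^ 2 ≤ r := by
  have hhead : 0 ≤ ∑ j ∈ Finset.range m, β j * ⟪φ, ψ j⟫ ^ 2 :=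
    Finset.sum_nonneg fun j _ => mul_nonneg (hβ j) (sq_nonneg _)
  linarith [hφ.1.sum_add_tsum_nat_add m, hφ.2]

lemma memF.nonneg (hφ : memF ψ β r φ) (hβ : ∀ j, 0 ≤ β j) : 0 ≤ r :=
  (tsum_nonneg fun j => mul_nonneg (hβ j) (sq_nonneg _)).trans hφ.2

lemma memF.summable_and_tsum_nat_add_le (hφ : memF ψ β r φ) (hβ : ∀ j, 0 < β j)
    (hw : ∀ j, 0 ≤ w j) (hwβ : Antitone fun j => w j / β j) {n m : ℕ} (hnm : n ≤ m) :
    Summable (fun j => w (j + m) * ⟪φ, ψ (j + m)⟫ ^ 2) ∧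
      ∑' j, w (j + m) * ⟪φ, ψ (j + m)⟫ ^ 2 ≤ w n / β n * r := by
  have hle (j : ℕ) : w (j + m) * ⟪φ, ψ (j + m)⟫ ^ 2 ≤
      w n / β n * (β (j + m) * ⟪φ, ψ (j + m)⟫ ^ 2) := by
    rw [← mul_assoc]
    refine mul_le_mul_of_nonneg_right ?_ (sq_nonneg _)
    exact (div_le_iff₀ (hβ _)).1 (hwβ (by omega))
  have hsum := ((summable_nat_add_iff m).2 hφ.1).mul_left (w n / β n)
  have hsum' := hsum.of_nonneg_of_le (fun j => mul_nonneg (hw _) (sq_nonneg _)) hle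
  refine ⟨hsum', (hsum'.tsum_le_tsum hle hsum).trans ?_⟩
  rw [tsum_mul_left]
  exact mul_le_mul_of_nonneg_left (hφ.tsum_nat_add_le (fun j => (hβ j).le) m)
    (div_nonneg (hw n) (hβ n).le)

lemma wnorm2_le_of_inner_eq_of_lt (hφ : memF ψ β r φ) (hβ : ∀ j, 0 < β j) (hw : ∀ j, 0 ≤ w j)
    (hwβ : Antitone fun j => w j / β j) {γ : ℕ → ℝ} (hγ : ∀ j, 0 < γ j) (hγanti : Antitone γ)
    {n : ℕ} {M : ℝ} (hM : ∀ j ≤ n, w j ≤ M * γ j ^ 2) {x : E}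
    (hx : ∀ k, n < k → ⟪x, ψ k⟫ = ⟪φ, ψ k⟫) :
    wnorm2 ψ w x ≤ M * ∑' j, γ j ^ 2 * ⟪x, ψ j⟫ ^ 2 + w n / β n * r := by
  have htail : (fun j => w (j + (n + 1)) * ⟪x, ψ (j + (n + 1))⟫ ^ 2) =
      fun j => w (j + (n + 1)) * ⟪φ, ψ (j + (n + 1))⟫ ^ 2 := by
    funext j; rw [hx _ (by omega)]
  obtain ⟨hsum, hle⟩ := hφ.summable_and_tsum_nat_add_le hβ hw hwβ (Nat.le_succ n)
  rw [← htail] at hsum hle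
  have hM0 : 0 ≤ M := nonneg_of_mul_nonneg_left ((hw 0).trans (hM 0 n.zero_le)) (by
    have := hγ 0; positivity)
  have hγx : Summable fun j => γ j ^ 2 * ⟪x, ψ j⟫ ^ 2 :=
    ψ.summable_mul_inner_sq (c := γ 0 ^ 2) (fun j => by
      rw [abs_sq]; exact pow_le_pow_left₀ (hγ j).le (hγanti j.zero_le) 2) x
  have hhead : ∑ j ∈ Finset.range (n + 1), w j * ⟪x, ψ j⟫ ^ 2 ≤
      M * ∑' j, γ j ^ 2 * ⟪x, ψ j⟫ ^ 2 :=
    calc ∑ j ∈ Finset.range (n + 1), w j * ⟪x, ψ j⟫ ^ 2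
        ≤ ∑ j ∈ Finset.range (n + 1), M * (γ j ^ 2 * ⟪x, ψ j⟫ ^ 2) :=
          Finset.sum_le_sum fun j hj => by
            rw [← mul_assoc]
            exact mul_le_mul_of_nonneg_right
              (hM j (Nat.lt_succ_iff.1 (Finset.mem_range.1 hj))) (sq_nonneg _)
      _ ≤ M * ∑' j, γ j ^ 2 * ⟪x, ψ j⟫ ^ 2 := by
          rw [← Finset.mul_sum]
          exact mul_le_mul_of_nonneg_left
            (hγx.sum_le_tsum _ fun j _ => by positivity) hM0
  have hsum_all : Summable fun j => w j * ⟪x, ψ j⟫ ^ 2 :=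
    (summable_nat_add_iff (f := fun j => w j * ⟪x, ψ j⟫ ^ 2) (n + 1)).1 hsum
  rw [wnorm2, ← hsum_all.sum_add_tsum_nat_add (n + 1)]
  exact add_le_add hhead hle

end Ellipsoid

lemma tsum_sq_mul_inner_sub_galerkin_sq_le {γ β : ℕ → ℝ} {d r : ℝ} {φ : E} (hd : 0 < d)
    (hγ : ∀ j, 0 < γ j) (hγanti : Antitone γ) (hβ : ∀ j, 0 < β j) (hβmono : Monotone β)
    (hT : memG ψ γ d T) (hφ : memF ψ β r φ) (m : ℕ) :
    ∑' j, γ j ^ 2 * ⟪φ - galerkin ψ T φ m, ψ j⟫ ^ 2 ≤ d ^ 4 * γ m ^ 2 * (r / β m) := by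
  obtain ⟨hsym, hpos, -, hsand⟩ := hT
  have hTpos : T.IsPositive := (T.isPositive_iff).2 ⟨hsym, fun x => by
    rcases eq_or_ne x 0 with rfl | hx
    · simp
    · exact (hpos x hx).le⟩
  set e := φ - galerkin ψ T φ m
  have hTe : ‖T e‖ ^ 2 ≤ (d * γ m) ^ 2 * ∑' j, ⟪e, ψ (j + m)⟫ ^ 2 :=
    norm_apply_sq_le_of_inner_apply_eq_zero ψ hγ hγanti hTpos (fun h => (hsand h).2) hd.le
      fun k => inner_apply_sub_galerkin_of_lt ψ (opMat_posDef ψ hsym hpos).isUnit φ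
  have htail : ∑' j, ⟪e, ψ (j + m)⟫ ^ 2 ≤ r / β m := by
    rw [le_div_iff₀ (hβ m), mul_comm, ← tsum_mul_left]
    refine (Summable.tsum_le_tsum (fun j => ?_)
      (((summable_nat_add_iff m).2 (ψ.summable_inner_sq e)).mul_left _)
      ((summable_nat_add_iff m).2 hφ.1)).trans (hφ.tsum_nat_add_le (fun j => (hβ j).le) m)
    rw [inner_sub_left, inner_galerkin_of_le ψ φ (by omega), sub_zero]
    exact mul_le_mul_of_nonneg_right (hβmono (by omega)) (sq_nonneg _)
  calc ∑' j, γ j ^ 2 * ⟪e, ψ j⟫ ^ 2 ≤ d ^ 2 * ‖T e‖ ^ 2 :=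
        (inv_mul_le_iff₀ (by positivity)).1 (hsand e).1
    _ ≤ d ^ 2 * ((d * γ m) ^ 2 * (r / β m)) :=
        mul_le_mul_of_nonneg_left (hTe.trans (mul_le_mul_of_nonneg_left htail (sq_nonneg _)))
          (sq_nonneg _)
    _ = d ^ 4 * γ m ^ 2 * (r / β m) := by ring

lemma wnorm2_sub_galerkin_le {γ β w : ℕ → ℝ} {d r : ℝ} {φ : E} (hd : 0 < d)
    (hγ : ∀ j, 0 < γ j) (hγanti : Antitone γ) (hβ : ∀ j, 0 < β j) (hβmono : Monotone β)
    (hT : memG ψ γ d T) (hφ : memF ψ β r φ) (hw : ∀ j, 0 ≤ w j)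
    (hwβ : Antitone fun j => w j / β j) {n : ℕ} {M : ℝ} (hM : ∀ j ≤ n, w j ≤ M * γ j ^ 2) :
    wnorm2 ψ w (φ - galerkin ψ T φ (n + 1)) ≤ (d ^ 4 + 1) * (M * γ n ^ 2 * (r / β n)) := by
  have hr := hφ.nonneg fun j => (hβ j).le
  have hM0 : 0 ≤ M := nonneg_of_mul_nonneg_left ((hw 0).trans (hM 0 n.zero_le))
    (pow_pos (hγ 0) 2)
  have hγβ : γ (n + 1) ^ 2 * (r / β (n + 1)) ≤ γ n ^ 2 * (r / β n) :=
    mul_le_mul (pow_le_pow_left₀ (hγ _).le (hγanti n.le_succ) 2)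
      (div_le_div_of_nonneg_left hr (hβ n) (hβmono n.le_succ)) (div_nonneg hr (hβ _).le)
      (sq_nonneg _)
  have hwn : w n / β n * r ≤ M * γ n ^ 2 * (r / β n) := by
    rw [div_mul_comm, mul_comm]
    exact mul_le_mul_of_nonneg_right (hM n le_rfl) (div_nonneg hr (hβ n).le)
  calc wnorm2 ψ w (φ - galerkin ψ T φ (n + 1))
      ≤ M * ∑' j, γ j ^ 2 * ⟪φ - galerkin ψ T φ (n + 1), ψ j⟫ ^ 2 + w n / β n * r :=
        wnorm2_le_of_inner_eq_of_lt hφ hβ hw hwβ hγ hγanti hM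
          fun k hk => by rw [inner_sub_left, inner_galerkin_of_le ψ φ hk, sub_zero]
    _ ≤ M * (d ^ 4 * γ (n + 1) ^ 2 * (r / β (n + 1))) + M * γ n ^ 2 * (r / β n) :=
        add_le_add (mul_le_mul_of_nonneg_left
          (tsum_sq_mul_inner_sub_galerkin_sq_le ψ hd hγ hγanti hβ hβmono hT hφ _) hM0) hwn
    _ ≤ M * (d ^ 4 * (γ n ^ 2 * (r / β n))) + M * γ n ^ 2 * (r / β n) := by
        rw [mul_assoc (d ^ 4)]
        gcongr M * (d ^ 4 * ?_) + _
    _ = (d ^ 4 + 1) * (M * γ n ^ 2 * (r / β n)) := by ring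

end Galerkin

theorem stmt_7_general (ψ : HilbertBasis ℕ ℝ H) (γ : ℕ → ℝ) (d : ℝ) (hd : 1 ≤ d)
    (hγpos : ∀ j, 0 < γ j) (hγanti : Antitone γ)
    (β : ℕ → ℝ) (hβ1 : β 0 = 1) (hβmono : Monotone β)
    (r : ℝ)
    (T : H →L[ℝ] H) (hT : memG ψ γ d T)
    (φ : H) (hφ : memF ψ β r φ)
    (w : ℕ → ℝ) (hw : ∀ j, 0 < w j) (hwβ : Antitone (fun j => w j / β j)) :
    ∀ m : ℕ, 1 ≤ m →
      wnorm2 ψ w (φ - galerkin ψ T φ m) ≤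
        34 * d ^ 8 * r * (w (m - 1) / β (m - 1)) *
          max 1 ((γ (m - 1) ^ 2 / w (m - 1)) * ⨆ j : Fin m, w (j : ℕ) / γ (j : ℕ) ^ 2) := by
  intro m hm
  obtain ⟨n, rfl⟩ := Nat.exists_eq_add_of_le' hm
  rw [Nat.add_sub_cancel]
  have hβ (j : ℕ) : 0 < β j := (hβ1 ▸ one_pos : 0 < β 0).trans_le (hβmono j.zero_le)
  have hr : 0 ≤ r := hφ.nonneg fun j => (hβ j).le
  set M := ⨆ j : Fin (n + 1), w j / γ j ^ 2
  have hle_M (i : Fin (n + 1)) : w i / γ i ^ 2 ≤ M :=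
    le_ciSup (f := fun i : Fin (n + 1) => w i / γ i ^ 2) (Set.finite_range _).bddAbove i
  have hM0 : 0 ≤ M := (div_pos (hw 0) (pow_pos (hγpos 0) 2)).le.trans (hle_M 0)
  have hd8 : d ^ 4 + 1 ≤ 34 * d ^ 8 := by nlinarith [one_le_pow₀ (n := 4) hd]
  have := hw n
  have := hβ n
  calc wnorm2 ψ w (φ - galerkin ψ T φ (n + 1)) ≤ (d ^ 4 + 1) * (M * γ n ^ 2 * (r / β n)) :=
        wnorm2_sub_galerkin_le ψ (by linarith) hγpos hγanti hβ hβmono hT hφ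
          (fun j => (hw j).le) hwβ
          fun j hj => (div_le_iff₀ (pow_pos (hγpos j) 2)).1 (hle_M ⟨j, Nat.lt_succ_of_le hj⟩)
    _ ≤ 34 * d ^ 8 * (M * γ n ^ 2 * (r / β n)) :=
        mul_le_mul_of_nonneg_right hd8 (by have := hγpos n; positivity)
    _ = 34 * d ^ 8 * r * (w n / β n) * (γ n ^ 2 / w n * M) := by field_simp
    _ ≤ _ := by gcongr; exact le_max_right _ _

/-- Lemma B.1, (B.4): weighted-norm bound for the Galerkin approximation error. -/
theorem stmt_7 (ψ : HilbertBasis ℕ ℝ H) (γ : ℕ → ℝ) (d : ℝ) (hd : 1 ≤ d)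
    (hγ1 : γ 0 = 1) (hγpos : ∀ j, 0 < γ j) (hγanti : Antitone γ)
    (hγ0 : Filter.Tendsto γ Filter.atTop (nhds 0)) (hγsum : Summable γ)
    (β : ℕ → ℝ) (hβ1 : β 0 = 1) (hβmono : Monotone β)
    (hβ0 : Filter.Tendsto (fun j => (β j)⁻¹) Filter.atTop (nhds 0)) (r : ℝ) (hr : 0 < r)
    (T : H →L[ℝ] H) (hT : memG ψ γ d T)
    (φ : H) (hφ : memF ψ β r φ)
    (w : ℕ → ℝ) (hw : ∀ j, 0 < w j) (hwβ : Antitone (fun j => w j / β j)) :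
    ∀ m : ℕ, 1 ≤ m →
      wnorm2 ψ w (φ - galerkin ψ T φ m) ≤
        34 * d ^ 8 * r * (w (m - 1) / β (m - 1)) *
          max 1 ((γ (m - 1) ^ 2 / w (m - 1)) * ⨆ j : Fin m, w (j : ℕ) / γ (j : ℕ) ^ 2) :=
  stmt_7_general ψ γ d hd hγpos hγanti β hβ1 hβmono r T hT φ hφ w hw hwβ
end
end
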